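/- For every ε > 0 there exists r ∈ (0,1) such that for all distinct z,w ∈ D with |z| > r or |w| > r one has β(z/2, w/2) ≤ ε·β(z,w). In other words, β(z/2,w/2)/β(z,w) → 0 as |z| → 1 or |w| → 1. -/

import Mathlib

open Complex Filter Set

noncomputable section

/-- The open unit disc in the complex plane. -/
def unitD : Set ℂ := {z : ℂ | ‖z‖ < 1}

/-- The pseudohyperbolic distance ρ(z,w) = |z-w| / |1 - conj(w) z|. -/
def hrho (z w : ℂ) : ℝ := ‖(z - w) / (1 - (starRingEnd ℂ) w * z)‖

/-- The hyperbolic distance β(z,w) = log((1+ρ)/(1-ρ)). -/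
def hbeta (z w : ℂ) : ℝ := Real.log ((1 + hrho z w) / (1 - hrho z w))

/-- The hyperbolic disc of center z0 and radius R. -/
def hdisc (z0 : ℂ) (R : ℝ) : Set ℂ := {z : ℂ | z ∈ unitD ∧ hbeta z z0 < R}

set_option maxHeartbeats 1000000

lemma normSq_identity' (z w : ℂ) : Complex.normSq (1 - (starRingEnd ℂ) w * z) =
    Complex.normSq (z - w) + (1 - Complex.normSq z) * (1 - Complex.normSq w) := by
  simp only [Complex.normSq_apply, Complex.sub_re, Complex.sub_im, Complex.mul_re,
    Complex.mul_im, Complex.conj_re, Complex.conj_im, Complex.one_re, Complex.one_im]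
  ring

lemma denom_lt' (z w : ℂ) (hz : ‖z‖ < 1) (hw : ‖w‖ < 1) :
    ‖z - w‖ < ‖1 - (starRingEnd ℂ) w * z‖ := by
  have h1 : Complex.normSq z < 1 := by
    rw [← Complex.sq_norm] ; nlinarith [norm_nonneg z]
  have h2 : Complex.normSq w < 1 := by
    rw [← Complex.sq_norm] ; nlinarith [norm_nonneg w]
  have := normSq_identity' z w
  have h3 : Complex.normSq (z - w) < Complex.normSq (1 - (starRingEnd ℂ) w * z) := by nlinarith
  rw [← Complex.sq_norm, ← Complex.sq_norm] at h3
  nlinarith [norm_nonneg (z - w), norm_nonneg (1 - (starRingEnd ℂ) w * z)]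

lemma hrho_symm' (z w : ℂ) : hrho z w = hrho w z := by
  unfold hrho
  rw [norm_div, norm_div]
  congr 1
  · exact norm_sub_rev z w
  · rw [← Complex.norm_conj (1 - (starRingEnd ℂ) w * z)]
    congr 1
    simp [mul_comm]

lemma hbeta_symm' (z w : ℂ) : hbeta z w = hbeta w z := by unfold hbeta; rw [hrho_symm']

lemma hbeta_core' (ε : ℝ) (hε : 0 < ε) (z w : ℂ) (hz : ‖z‖ < 1)
    (hw : ‖w‖ < 1) (hzw : z ≠ w)
    (hbound : 1 - (‖z‖)^2 ≤ (3*ε/20) * Real.exp (-(8/ε))) :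
    hbeta (z/2) (w/2) ≤ ε * hbeta z w := by
  set A : ℝ := ‖1 - (starRingEnd ℂ) w * z‖ with hAdef
  set d : ℝ := ‖z - w‖ with hddef
  have hdlt : d < A := denom_lt' z w hz hw
  have hd0 : 0 < d := by
    simp only [hddef]
    rw [norm_pos_iff]
    exact sub_ne_zero.mpr hzw
  have hA0 : 0 < A := lt_trans hd0 hdlt
  have hrho_eq : hrho z w = d / A := by unfold hrho; rw [norm_div]
  set ρ : ℝ := hrho z w with hρdef
  have hρ0 : 0 < ρ := by rw [hrho_eq]; positivity
  have hρ1 : ρ < 1 := by rw [hrho_eq]; exact (div_lt_one hA0).mpr hdlt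
  -- the half points
  set u : ℂ := 1 - (starRingEnd ℂ) w * z / 4 with hudef
  have hsub : z/2 - w/2 = (z - w)/2 := by ring
  have hden : 1 - (starRingEnd ℂ) (w/2) * (z/2) = u := by
    rw [hudef, map_div₀]
    have : (starRingEnd ℂ) (2:ℂ) = 2 := Complex.conj_ofNat 2
    rw [this]; ring
  have hrho'_eq : hrho (z/2) (w/2) = (d/2) / ‖u‖ := by
    unfold hrho
    rw [hsub, hden, norm_div, norm_div, Complex.norm_two]
  set ρ' : ℝ := hrho (z/2) (w/2) with hρ'def
  have habs_u_le : ‖u‖ ≤ 5/4 := by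
    rw [hudef]
    calc ‖1 - (starRingEnd ℂ) w * z / 4‖
        ≤ ‖(1:ℂ)‖ + ‖(starRingEnd ℂ) w * z / 4‖ := by
          simpa using norm_sub_le (1 : ℂ) ((starRingEnd ℂ) w * z / 4)
      _ ≤ 5/4 := by
          rw [norm_div, norm_mul, Complex.norm_conj]
          simp only [norm_one, Complex.norm_ofNat]
          nlinarith [norm_nonneg z, norm_nonneg w]
  have habs_u_ge : 3/4 ≤ ‖u‖ := by
    have h1 : ‖(starRingEnd ℂ) w * z / 4‖ ≤ 1/4 := by
      rw [norm_div, norm_mul, Complex.norm_conj]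
      simp only [Complex.norm_ofNat]
      nlinarith [norm_nonneg z, norm_nonneg w]
    have h2 : (1:ℝ) ≤ ‖u‖ + ‖(starRingEnd ℂ) w * z / 4‖ := by
      have := norm_add_le u ((starRingEnd ℂ) w * z / 4)
      have heq : u + (starRingEnd ℂ) w * z / 4 = 1 := by rw [hudef]; ring
      rw [heq] at this
      simpa using this
    linarith
  have hu0 : (0:ℝ) < ‖u‖ := by linarith
  have hρ'_nonneg : 0 ≤ ρ' := norm_nonneg _
  -- ρ' ≤ 4/5 via normSq identity at z/2, w/2
  have hρ'45 : ρ' ≤ 4/5 := by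
    have hid := normSq_identity' (z/2) (w/2)
    rw [hsub, hden] at hid
    have hnz : Complex.normSq (z/2) ≤ 1/4 := by
      rw [← Complex.sq_norm, norm_div]
      simp only [Complex.norm_ofNat]
      nlinarith [norm_nonneg z]
    have hnw : Complex.normSq (w/2) ≤ 1/4 := by
      rw [← Complex.sq_norm, norm_div]
      simp only [Complex.norm_ofNat]
      nlinarith [norm_nonneg w]
    have hNu : Complex.normSq u ≤ 25/16 := by
      rw [← Complex.sq_norm]; nlinarith [norm_nonneg u]
    have hNd : Complex.normSq ((z-w)/2) ≤ (16/25) * Complex.normSq u := by nlinarith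
    have hNd' : (d/2)^2 ≤ (16/25) * (‖u‖)^2 := by
      rw [← Complex.sq_norm ((z-w)/2)] at hNd
      rw [← Complex.sq_norm u] at hNd
      rw [norm_div] at hNd
      simpa using hNd
    have : ρ'^2 ≤ 16/25 := by
      rw [hrho'_eq, div_pow]
      rw [div_le_iff₀ (by positivity)]
      nlinarith
    nlinarith
  have h1ρ' : (1:ℝ)/5 ≤ 1 - ρ' := by linarith
  have h1ρ'0 : (0:ℝ) < 1 - ρ' := by linarith
  -- β' ≤ 2ρ'/(1-ρ')
  have hβ'_le : hbeta (z/2) (w/2) ≤ 2*ρ'/(1-ρ') := by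
    unfold hbeta
    rw [← hρ'def]
    have hpos : (0:ℝ) < (1 + ρ')/(1 - ρ') := by positivity
    have := Real.log_le_sub_one_of_pos hpos
    have heq : (1 + ρ')/(1 - ρ') - 1 = 2*ρ'/(1-ρ') := by
      field_simp; ring
    linarith [heq ▸ this]
  -- β ≥ ρ
  have h1ρ0 : (0:ℝ) < 1 - ρ := by linarith
  have hβ_ge : ρ ≤ hbeta z w := by
    unfold hbeta
    rw [← hρdef, Real.log_div (by positivity) (by positivity)]
    have h1 : Real.log (1 - ρ) ≤ -ρ := by
      have := Real.log_le_sub_one_of_pos h1ρ0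
      linarith
    have h2 : 0 ≤ Real.log (1 + ρ) := Real.log_nonneg (by linarith)
    linarith
  by_cases hcase : ρ ≤ 1 - Real.exp (-(8/ε))
  · -- case 1: ρ small
    have hAub : A ≤ (1 - (‖z‖)^2) + d := by
      have e1 : (1:ℂ) - (starRingEnd ℂ) w * z =
          (1 - (starRingEnd ℂ) z * z) + ((starRingEnd ℂ) z - (starRingEnd ℂ) w) * z := by ring
      have e2 : ‖1 - (starRingEnd ℂ) z * z‖ = 1 - (‖z‖)^2 := by
        have : (1:ℂ) - (starRingEnd ℂ) z * z = ((1 - Complex.normSq z : ℝ) : ℂ) := by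
          rw [← Complex.normSq_eq_conj_mul_self]; push_cast; ring
        rw [this, Complex.norm_real, Real.norm_eq_abs, ← Complex.sq_norm]
        rw [_root_.abs_of_nonneg]
        nlinarith [norm_nonneg z]
      have e3 : ‖((starRingEnd ℂ) z - (starRingEnd ℂ) w) * z‖ ≤ d := by
        rw [norm_mul]
        have : ‖(starRingEnd ℂ) z - (starRingEnd ℂ) w‖ = d := by
          rw [← map_sub, Complex.norm_conj]
        rw [this]
        nlinarith [norm_nonneg (z-w)]
      calc A = ‖(1 - (starRingEnd ℂ) z * z) + ((starRingEnd ℂ) z - (starRingEnd ℂ) w) * z‖ := by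
              rw [hAdef, e1]
        _ ≤ ‖1 - (starRingEnd ℂ) z * z‖ + ‖((starRingEnd ℂ) z - (starRingEnd ℂ) w) * z‖ :=
              norm_add_le _ _
        _ ≤ (1 - (‖z‖)^2) + d := by rw [e2]; linarith
    have hdA : d = ρ * A := by rw [hrho_eq]; field_simp
    have hA1ρ : A * (1 - ρ) ≤ 1 - (‖z‖)^2 := by nlinarith
    have hexp : Real.exp (-(8/ε)) ≤ 1 - ρ := by linarith
    have hexppos : 0 < Real.exp (-(8/ε)) := Real.exp_pos _
    -- A ≤ 3ε/20
    have hAsmall : A ≤ 3*ε/20 := by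
      have h1 : A * (1-ρ) ≤ (3*ε/20) * (1-ρ) := by
        calc A * (1-ρ) ≤ 1 - (‖z‖)^2 := hA1ρ
          _ ≤ (3*ε/20) * Real.exp (-(8/ε)) := hbound
          _ ≤ (3*ε/20) * (1-ρ) := by nlinarith
      exact le_of_mul_le_mul_right (by linarith [h1]) h1ρ0
    -- ρ' ≤ (2/3) d
    have hρ'd : ρ' ≤ (2/3) * d := by
      rw [hrho'_eq]
      rw [div_le_iff₀ hu0]
      nlinarith
    have hβ'10 : hbeta (z/2) (w/2) ≤ 10 * ρ' := by
      have : 2*ρ'/(1-ρ') ≤ 10*ρ' := by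
        rw [div_le_iff₀ h1ρ'0]
        nlinarith
      linarith
    calc hbeta (z/2) (w/2) ≤ 10 * ρ' := hβ'10
      _ ≤ 10 * ((2/3)*d) := by linarith
      _ = (20/3) * (ρ * A) := by rw [← hdA]; ring
      _ ≤ ε * ρ := by nlinarith
      _ ≤ ε * hbeta z w := by nlinarith
  · -- case 2: ρ large
    push_neg at hcase
    have h1ρlt : 1 - ρ < Real.exp (-(8/ε)) := by linarith
    have hlog : Real.log (1 - ρ) < -(8/ε) := by
      have := Real.log_lt_log h1ρ0 h1ρlt
      rwa [Real.log_exp] at this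
    have hβ_big : 8/ε ≤ hbeta z w := by
      unfold hbeta
      rw [← hρdef, Real.log_div (by positivity) (by positivity)]
      have h2 : 0 ≤ Real.log (1 + ρ) := Real.log_nonneg (by linarith)
      linarith
    have hβ'8 : hbeta (z/2) (w/2) ≤ 8 := by
      have : 2*ρ'/(1-ρ') ≤ 8 := by
        rw [div_le_iff₀ h1ρ'0]
        nlinarith
      linarith
    calc hbeta (z/2) (w/2) ≤ 8 := hβ'8
      _ = ε * (8/ε) := by field_simp
      _ ≤ ε * hbeta z w := by nlinarith

/-- β(z/2, w/2)/β(z,w) tends to 0 as |z| → 1 or |w| → 1. -/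
theorem hbeta_half_small_near_boundary :
    ∀ ε > (0 : ℝ), ∃ r : ℝ, 0 < r ∧ r < 1 ∧
      ∀ z ∈ unitD, ∀ w ∈ unitD, z ≠ w → (r < ‖z‖ ∨ r < ‖w‖) →
        hbeta (z / 2) (w / 2) ≤ ε * hbeta z w := by
  intro ε hε
  set m : ℝ := min (1/2) ((ε/16) * Real.exp (-(8/ε))) with hmdef
  have hm0 : 0 < m := lt_min (by norm_num) (by positivity)
  have hm2 : m ≤ 1/2 := min_le_left _ _
  have hm3 : m ≤ (ε/16) * Real.exp (-(8/ε)) := min_le_right _ _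
  refine ⟨1 - m, by linarith, by linarith, ?_⟩
  intro z hz w hw hzw hor
  have hz1 : ‖z‖ < 1 := hz
  have hw1 : ‖w‖ < 1 := hw
  have key : ∀ v : ℂ, 1 - m < ‖v‖ → ‖v‖ < 1 →
      1 - (‖v‖)^2 ≤ (3*ε/20) * Real.exp (-(8/ε)) := by
    intro v h1 h2
    have hv0 : 0 ≤ ‖v‖ := norm_nonneg v
    have hexp : 0 < Real.exp (-(8/ε)) := Real.exp_pos _
    nlinarith
  rcases hor with h | h
  · exact hbeta_core' ε hε z w hz1 hw1 hzw (key z h hz1)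
  · rw [hbeta_symm' (z/2) (w/2), hbeta_symm' z w]
    exact hbeta_core' ε hε w z hw1 hz1 (Ne.symm hzw) (key w h hw1)
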